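/- Let ρ₁, ρ₂, h₁, h₂, δ, ξ be positive reals and define σℓ(ξ) = δ⁻¹ ξ tanh(hℓ δ ξ) for ℓ = 1,2. Then ρ₁ρ₂/(ρ₁σ₂(ξ) + ρ₂σ₁(ξ)) ≤ min{ (ρ₁/h₁)(ξ⁻¹ + h₁δ)², (ρ₂/h₂)(ξ⁻¹ + h₂δ)² }. -/
import Mathlib

private lemma tanh_lb {x : ℝ} (hx : 0 ≤ x) : x / (1 + x) ≤ Real.tanh x := by
  rw [Real.tanh_eq_sinh_div_cosh, Real.sinh_eq, Real.cosh_eq]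
  rw [div_le_div_iff₀ (by positivity) (by positivity)]
  have h1 := Real.add_one_le_exp (2 * x)
  have h2 : Real.exp (2 * x) = Real.exp x * Real.exp x := by
    rw [← Real.exp_add]; ring_nf
  have h3 : Real.exp x * Real.exp (-x) = 1 := by
    rw [← Real.exp_add]; simp
  nlinarith [Real.exp_pos x, Real.exp_pos (-x)]

private lemma tanh_pos' {x : ℝ} (hx : 0 < x) : 0 < Real.tanh x :=
  lt_of_lt_of_le (by positivity) (tanh_lb hx.le)

private lemma side (ρ ρ' h δ ξ σ D : ℝ) (hρ : 0 < ρ) (hρ' : 0 < ρ')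
    (hh : 0 < h) (hδ : 0 < δ) (hξ : 0 < ξ) (hσ : 0 < σ)
    (hbD : ρ' * σ ≤ D) (hb : h * ξ ^ 2 ≤ (1 + h * δ * ξ) * σ) :
    ρ * ρ' / D ≤ (ρ / h) * (ξ⁻¹ + h * δ) ^ 2 := by
  have hD : 0 < D := lt_of_lt_of_le (by positivity) hbD
  calc ρ * ρ' / D ≤ ρ * ρ' / (ρ' * σ) := by gcongr
    _ = ρ / σ := by field_simp
    _ ≤ (ρ / h) * (ξ⁻¹ + h * δ) ^ 2 := by
        have e : ξ⁻¹ + h * δ = (1 + h * δ * ξ) * ξ⁻¹ := by field_simp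
        have e2 : (ρ / h) * ((1 + h * δ * ξ) * ξ⁻¹) ^ 2 =
            ρ * (1 + h * δ * ξ) ^ 2 * σ / (h * ξ ^ 2) / σ := by
          field_simp
        rw [e, e2]
        gcongr
        rw [le_div_iff₀ (by positivity)]
        have ha : 0 ≤ h * δ * ξ := by positivity
        nlinarith [mul_le_mul_of_nonneg_left hb hρ.le,
          mul_nonneg (mul_nonneg (mul_nonneg hρ.le hσ.le) ha)
            (by linarith : (0:ℝ) ≤ 1 + h * δ * ξ)]

theorem stmt6 (ρ₁ ρ₂ h₁ h₂ δ ξ : ℝ) (hρ₁ : 0 < ρ₁) (hρ₂ : 0 < ρ₂)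
    (hh₁ : 0 < h₁) (hh₂ : 0 < h₂) (hδ : 0 < δ) (hξ : 0 < ξ)
    (σ₁ σ₂ : ℝ)
    (hσ₁ : σ₁ = δ⁻¹ * ξ * Real.tanh (h₁ * δ * ξ))
    (hσ₂ : σ₂ = δ⁻¹ * ξ * Real.tanh (h₂ * δ * ξ)) :
    ρ₁ * ρ₂ / (ρ₁ * σ₂ + ρ₂ * σ₁) ≤
      min ((ρ₁ / h₁) * (ξ⁻¹ + h₁ * δ) ^ 2) ((ρ₂ / h₂) * (ξ⁻¹ + h₂ * δ) ^ 2) := by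
  have key : ∀ h : ℝ, 0 < h → h * ξ ^ 2 ≤ (1 + h * δ * ξ) * (δ⁻¹ * ξ * Real.tanh (h * δ * ξ)) := by
    intro h hh
    have ha : 0 < h * δ * ξ := by positivity
    have := tanh_lb ha.le
    rw [div_le_iff₀ (by positivity)] at this
    calc h * ξ ^ 2 = δ⁻¹ * ξ * (h * δ * ξ) := by field_simp
      _ ≤ δ⁻¹ * ξ * (Real.tanh (h * δ * ξ) * (1 + h * δ * ξ)) := by
          gcongr
      _ = (1 + h * δ * ξ) * (δ⁻¹ * ξ * Real.tanh (h * δ * ξ)) := by ring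
  have hs1 : 0 < σ₁ := by rw [hσ₁]; have := tanh_pos' (show (0:ℝ) < h₁ * δ * ξ by positivity); positivity
  have hs2 : 0 < σ₂ := by rw [hσ₂]; have := tanh_pos' (show (0:ℝ) < h₂ * δ * ξ by positivity); positivity
  rw [le_min_iff]
  constructor
  · exact side ρ₁ ρ₂ h₁ δ ξ σ₁ _ hρ₁ hρ₂ hh₁ hδ hξ hs1
      (by nlinarith [mul_pos hρ₁ hs2]) (hσ₁ ▸ key h₁ hh₁)
  · have : ρ₁ * ρ₂ / (ρ₁ * σ₂ + ρ₂ * σ₁) = ρ₂ * ρ₁ / (ρ₂ * σ₁ + ρ₁ * σ₂) := by ring_nf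
    rw [this]
    exact side ρ₂ ρ₁ h₂ δ ξ σ₂ _ hρ₂ hρ₁ hh₂ hδ hξ hs2
      (by nlinarith [mul_pos hρ₂ hs1]) (hσ₂ ▸ key h₂ hh₂)
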